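/- arXiv:2510.18748 — 3 statements merged into one kernel-verified Lean document; each statement's English description precedes it below -/
import Mathlib

section
/- Let Q• be a chain complex of projective left R-modules with Q_i = 0 for i > n and for i < 0, whose homology satisfies H_j(Q•) ≅ N for j = 0,1 and H_j(Q•) = 0 otherwise. Then there exists a chain map Ψ : ΣQ• → Q• (where Σ denotes suspension) inducing an isomorphism H_1(ΣQ•) → H_1(Q•). -/
/-!
Transport the isomorphism `H₀(Q•) ≅ N ≅ H₁(Q•)` to a map `Q₀ → Z₁ ⧸ B₁` and lift it to
`ψ₀ : Q₀ → Z₁` by projectivity of `Q₀`; since the map on quotients is an isomorphism, `ψ₀`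
induces an isomorphism `H₁(ΣQ•) = Q₀ ⧸ B₀ → H₁(Q•)`. The higher components are then built one
at a time: if `ψⱼ ∘ dⱼ` lands in the boundaries `Bⱼ₊₁`, projectivity of `Qⱼ₊₁` lifts `-ψⱼ ∘ dⱼ`
through `dⱼ₊₁`, and exactness of `Q•` in positive degrees shows that the lift again sends
boundaries to boundaries.
-/

open LinearMap

theorem Module.Projective.exists_comp_eq_of_range_le {R P X Y : Type*} [Ring R]
    [AddCommGroup P] [Module R P] [Module.Projective R P] [AddCommGroup X] [Module R X]
    [AddCommGroup Y] [Module R Y] (g : X →ₗ[R] Y) (φ : P →ₗ[R] Y)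
    (h : range φ ≤ range g) : ∃ φ' : P →ₗ[R] X, g ∘ₗ φ' = φ := by
  obtain ⟨φ', hφ'⟩ := Module.projective_lifting_property g.rangeRestrict
    (φ.codRestrict (range g) fun p => h ⟨p, rfl⟩) g.surjective_rangeRestrict
  refine ⟨φ', LinearMap.ext fun p => ?_⟩
  simpa using congrArg Subtype.val (LinearMap.congr_fun hφ' p)

theorem Module.Projective.exists_lift_of_quotientEquiv {R P K : Type*} [Ring R]
    [AddCommGroup P] [Module R P] [Module.Projective R P] [AddCommGroup K] [Module R K]
    {S : Submodule R P} {I : Submodule R K} (e : (P ⧸ S) ≃ₗ[R] (K ⧸ I)) :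
    ∃ ψ : P →ₗ[R] K, (∀ p, ψ p ∈ I ↔ p ∈ S) ∧ ∀ k, ∃ p, k - ψ p ∈ I := by
  obtain ⟨ψ, hψ⟩ := Module.projective_lifting_property I.mkQ (e.toLinearMap ∘ₗ S.mkQ)
    I.mkQ_surjective
  have hψp (p : P) : I.mkQ (ψ p) = e (S.mkQ p) := LinearMap.congr_fun hψ p
  refine ⟨ψ, fun p => ?_, fun k => ?_⟩
  · rw [← Submodule.Quotient.mk_eq_zero I, ← Submodule.mkQ_apply, hψp,
      LinearEquiv.map_eq_zero_iff, Submodule.mkQ_apply, Submodule.Quotient.mk_eq_zero]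
  · obtain ⟨p, hp⟩ := (e.toEquiv.surjective.comp S.mkQ_surjective) (I.mkQ k)
    refine ⟨p, (Submodule.Quotient.eq I).1 ?_⟩
    rw [← Submodule.mkQ_apply, ← Submodule.mkQ_apply, hψp]
    exact hp.symm

section SuspensionChainMap

variable {R : Type*} [Ring R] {Q : ℕ → Type*} [∀ j, AddCommGroup (Q j)] [∀ j, Module R (Q j)]
  {d : ∀ j, Q (j + 1) →ₗ[R] Q j}

theorem exists_suspension_component_succ (hdd : ∀ j (q : Q (j + 2)), d j (d (j + 1) q) = 0)
    {j : ℕ} [Module.Projective R (Q (j + 1))]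
    (hex : ker (d (j + 1)) ≤ range (d (j + 2)))
    (φ : Q j →ₗ[R] Q (j + 1)) (hφ : ∀ q, φ (d j q) ∈ range (d (j + 1))) :
    ∃ φ' : Q (j + 1) →ₗ[R] Q (j + 2), (∀ q, d (j + 1) (φ' q) = -φ (d j q)) ∧
      ∀ q, φ' (d (j + 1) q) ∈ range (d (j + 2)) := by
  obtain ⟨φ', hφ'⟩ := Module.Projective.exists_comp_eq_of_range_le (d (j + 1)) (-(φ ∘ₗ d j))
    (by rintro _ ⟨q, rfl⟩; exact neg_mem (hφ q))
  have hcomm (q : Q (j + 1)) : d (j + 1) (φ' q) = -φ (d j q) := LinearMap.congr_fun hφ' q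
  refine ⟨φ', hcomm, fun q => hex ?_⟩
  rw [mem_ker, hcomm, hdd, map_zero, neg_zero]

theorem exists_suspension_chainMap_extending (hdd : ∀ j (q : Q (j + 2)), d j (d (j + 1) q) = 0)
    (hproj : ∀ j, Module.Projective R (Q j))
    (hex : ∀ j, 1 ≤ j → ker (d j) ≤ range (d (j + 1)))
    (ψ₀ : Q 0 →ₗ[R] Q 1) (hψ₀ : ∀ q, ψ₀ (d 0 q) ∈ range (d 1)) :
    ∃ ψ : ∀ j, Q j →ₗ[R] Q (j + 1),
      ψ 0 = ψ₀ ∧ ∀ j (q : Q (j + 1)), d (j + 1) (ψ (j + 1) q) = -ψ j (d j q) := by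
  have step (j : ℕ) (φ : {φ : Q j →ₗ[R] Q (j + 1) // ∀ q, φ (d j q) ∈ range (d (j + 1))}) :
      ∃ φ' : {φ' : Q (j + 1) →ₗ[R] Q (j + 2) // ∀ q, φ' (d (j + 1) q) ∈ range (d (j + 2))},
        ∀ q, d (j + 1) (φ'.1 q) = -φ.1 (d j q) := by
    have := hproj (j + 1)
    obtain ⟨φ', hcomm, hbd⟩ := exists_suspension_component_succ hdd
      (hex (j + 1) (Nat.le_add_left 1 j)) φ.1 φ.2
    exact ⟨⟨φ', hbd⟩, hcomm⟩
  choose next hnext using step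
  let ψ : ∀ j, {φ : Q j →ₗ[R] Q (j + 1) // ∀ q, φ (d j q) ∈ range (d (j + 1))} :=
    fun j => Nat.rec ⟨ψ₀, hψ₀⟩ next j
  exact ⟨fun j => (ψ j).1, rfl, fun j => hnext j (ψ j)⟩

end SuspensionChainMap

theorem stmt5_general (R : Type) [Ring R] (N : Type) [AddCommGroup N] [Module R N]
    (Q : ℕ → Type) [∀ j, AddCommGroup (Q j)] [∀ j, Module R (Q j)]
    (d : ∀ j, Q (j + 1) →ₗ[R] Q j)
    (hdd : ∀ j (q : Q (j + 2)), d j (d (j + 1) q) = 0)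
    (hproj : ∀ j, Module.Projective R (Q j))
    (h0 : Nonempty ((Q 0 ⧸ LinearMap.range (d 0)) ≃ₗ[R] N))
    (h1 : Nonempty ((↥(LinearMap.ker (d 0)) ⧸
        Submodule.comap (LinearMap.ker (d 0)).subtype (LinearMap.range (d 1))) ≃ₗ[R] N))
    (hex : ∀ j, 1 ≤ j → LinearMap.ker (d j) ≤ LinearMap.range (d (j + 1))) :
    ∃ ψ : ∀ j, Q j →ₗ[R] Q (j + 1),
      (∀ q : Q 0, d 0 (ψ 0 q) = 0) ∧
      (∀ j (q : Q (j + 1)), d (j + 1) (ψ (j + 1) q) = - ψ j (d j q)) ∧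
      (∀ z : Q 1, d 0 z = 0 → ∃ (q : Q 0) (w : Q 2), z = ψ 0 q + d 1 w) ∧
      (∀ q : Q 0, (∃ w : Q 2, ψ 0 q = d 1 w) → ∃ u : Q 1, q = d 0 u) := by
  have := hproj 0
  obtain ⟨ψ₀, hψ₀_mem, hψ₀_surj⟩ :=
    Module.Projective.exists_lift_of_quotientEquiv (h0.some.trans h1.some.symm)
  obtain ⟨ψ, hψ0, hchain⟩ := exists_suspension_chainMap_extending hdd hproj hex
    ((ker (d 0)).subtype ∘ₗ ψ₀) fun q => (hψ₀_mem (d 0 q)).2 ⟨q, rfl⟩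
  have hψ0q (q : Q 0) : ψ 0 q = ψ₀ q := LinearMap.congr_fun hψ0 q
  refine ⟨ψ, fun q => hψ0q q ▸ (ψ₀ q).2, hchain, fun z hz => ?_, fun q ⟨w, hw⟩ => ?_⟩
  · obtain ⟨q, w, hw⟩ := hψ₀_surj ⟨z, hz⟩
    refine ⟨q, w, ?_⟩
    rw [hψ0q, hw, Submodule.subtype_apply, Submodule.coe_sub]
    abel
  · obtain ⟨u, hu⟩ := (hψ₀_mem q).1 ⟨w, (hψ0q q ▸ hw).symm⟩
    exact ⟨u, hu.symm⟩

/-- If `Q•` is a chain complex of projective `R`-modules, vanishing in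
degrees `> n`, with homology `≅ N` in degrees `0, 1` and zero elsewhere, then there is
a chain map `Ψ : ΣQ• → Q•` (given degreewise by `ψ j : Q j → Q (j+1)`, satisfying the
suspension chain-map identities) inducing an isomorphism `H₁(ΣQ•) → H₁(Q•)`.
Here `H₁(ΣQ•) = Q 0 / im (d 1 → 0)` and the last two conjuncts express surjectivity and
injectivity of the induced map on first homology. -/
theorem stmt5 (R : Type) [Ring R] (n : ℕ) (N : Type) [AddCommGroup N] [Module R N]
    (Q : ℕ → Type) [∀ j, AddCommGroup (Q j)] [∀ j, Module R (Q j)]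
    (d : ∀ j, Q (j + 1) →ₗ[R] Q j)
    (hdd : ∀ j (q : Q (j + 2)), d j (d (j + 1) q) = 0)
    (hproj : ∀ j, Module.Projective R (Q j))
    (hbdd : ∀ i, n < i → Subsingleton (Q i))
    (h0 : Nonempty ((Q 0 ⧸ LinearMap.range (d 0)) ≃ₗ[R] N))
    (h1 : Nonempty ((↥(LinearMap.ker (d 0)) ⧸
        Submodule.comap (LinearMap.ker (d 0)).subtype (LinearMap.range (d 1))) ≃ₗ[R] N))
    (hex : ∀ j, 1 ≤ j → LinearMap.ker (d j) ≤ LinearMap.range (d (j + 1))) :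
    ∃ ψ : ∀ j, Q j →ₗ[R] Q (j + 1),
      (∀ q : Q 0, d 0 (ψ 0 q) = 0) ∧
      (∀ j (q : Q (j + 1)), d (j + 1) (ψ (j + 1) q) = - ψ j (d j q)) ∧
      (∀ z : Q 1, d 0 z = 0 → ∃ (q : Q 0) (w : Q 2), z = ψ 0 q + d 1 w) ∧
      (∀ q : Q 0, (∃ w : Q 2, ψ 0 q = d 1 w) → ∃ u : Q 1, q = d 0 u) :=
  stmt5_general R N Q d hdd hproj h0 h1 hex
end

section
/- (Shamash) Let x be a central element of R annihilating a left R-module N, S = R/(x), P• → N a projective resolution over R, and {φ_i : P_{i−1} → P_i} a null-homotopy of the lift of multiplication by x to P•. Then the reduced maps φ̄_i = φ_i ⊗_R S define a chain map Ψ : Σ(P• ⊗_R S) → P• ⊗_R S, i.e. φ̄_{i+1} d̄_{i+1} = −d̄_i φ̄_i for all i, and Ψ induces an isomorphism on first homology groups. -/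
/-!
Reducing the homotopy identities `d φ + φ d = x` modulo `x` shows at once that the `φ̄ᵢ`
anticommute with `d̄`. On first homology, a cycle `z` of `P̄•` satisfies `d₀ z = x u = d₀ (φ₀ u)`
for some `u`, so `z - φ₀ u` is a boundary by exactness of `P•`: this gives surjectivity.
For injectivity, if `φ₀ u ≡ d₁ w` mod `x`, applying `d₀` gives `x u = x (d₀ c)`, and since
the projective module `P₀` has no `x`-torsion, `u = d₀ c` is a boundary of `P̄•`.
-/

/-- The submodule `xM ⊆ M` of multiples of a ring element `x`; `M ⧸ xsub R x M`
realizes the reduction `M ⊗_R R/(x)`. -/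
def xsub (R : Type) [Ring R] (x : R) (M : Type) [AddCommGroup M] [Module R M] :
    Submodule R M :=
  Submodule.span R {m : M | ∃ p : M, m = x • p}

/-- The map induced on reductions mod `x` by an `R`-linear map (the functor `- ⊗_R S`). -/
def redMap (R : Type) [Ring R] (x : R) {M N : Type} [AddCommGroup M] [Module R M]
    [AddCommGroup N] [Module R N] (f : M →ₗ[R] N) :
    (M ⧸ xsub R x M) →ₗ[R] (N ⧸ xsub R x N) :=
  Submodule.mapQ _ _ f (by
    rw [xsub, Submodule.span_le]
    rintro m ⟨p, rfl⟩
    refine Submodule.mem_comap.mpr ?_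
    rw [map_smul]
    exact Submodule.subset_span ⟨f p, rfl⟩)

open Module

theorem Module.Projective.isTorsionFree (R P : Type*) [Semiring R] [AddCommMonoid P] [Module R P]
    [Projective R P] : IsTorsionFree R P := by
  obtain ⟨s, hs⟩ := Projective.out (R := R) (P := P)
  exact hs.injective.moduleIsTorsionFree s (map_smul s)

section Reduction

variable {R : Type} [Ring R] {x : R} {M M' M'' : Type}
  [AddCommGroup M] [Module R M] [AddCommGroup M'] [Module R M'] [AddCommGroup M''] [Module R M'']

theorem mem_xsub_iff (hx : ∀ r : R, r * x = x * r) {m : M} :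
    m ∈ xsub R x M ↔ ∃ p : M, m = x • p := by
  refine ⟨fun hm => ?_, fun hm => Submodule.subset_span hm⟩
  induction hm using Submodule.span_induction with
  | mem m hm => exact hm
  | zero => exact ⟨0, (smul_zero x).symm⟩
  | add _ _ _ _ ha hb =>
    obtain ⟨p, rfl⟩ := ha
    obtain ⟨q, rfl⟩ := hb
    exact ⟨p + q, (smul_add x p q).symm⟩
  | smul r _ _ ha =>
    obtain ⟨p, rfl⟩ := ha
    exact ⟨r • p, by rw [smul_smul, smul_smul, hx r]⟩

theorem mk_smul_eq_zero (p : M) : (Submodule.Quotient.mk (x • p) : M ⧸ xsub R x M) = 0 :=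
  (Submodule.Quotient.mk_eq_zero _).mpr (Submodule.subset_span ⟨p, rfl⟩)

@[simp]
theorem redMap_mk (f : M →ₗ[R] M') (p : M) :
    redMap R x f (Submodule.Quotient.mk p) = Submodule.Quotient.mk (f p) :=
  Submodule.mapQ_apply _ _ _ _

theorem redMap_redMap_eq_zero {f : M →ₗ[R] M'} {g : M' →ₗ[R] M} (h : ∀ p, g (f p) = x • p)
    (q : M ⧸ xsub R x M) : redMap R x g (redMap R x f q) = 0 := by
  obtain ⟨p, rfl⟩ := Submodule.Quotient.mk_surjective _ q
  rw [redMap_mk, redMap_mk, h, mk_smul_eq_zero]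

theorem redMap_redMap_eq_neg {f₁ : M' →ₗ[R] M} {g₁ : M →ₗ[R] M'} {f₂ : M'' →ₗ[R] M}
    {g₂ : M →ₗ[R] M''} (h : ∀ p, f₁ (g₁ p) + f₂ (g₂ p) = x • p) (q : M ⧸ xsub R x M) :
    redMap R x f₂ (redMap R x g₂ q) = -redMap R x f₁ (redMap R x g₁ q) := by
  obtain ⟨p, rfl⟩ := Submodule.Quotient.mk_surjective _ q
  simp only [redMap_mk]
  rw [eq_neg_iff_add_eq_zero, add_comm, ← Submodule.Quotient.mk_add, h, mk_smul_eq_zero]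

end Reduction

section FirstHomology

variable {R : Type} [Ring R] {x : R} (hx : ∀ r : R, r * x = x * r) {P₀ P₁ P₂ : Type}
  [AddCommGroup P₀] [Module R P₀] [AddCommGroup P₁] [Module R P₁] [AddCommGroup P₂] [Module R P₂]
  {d₀ : P₁ →ₗ[R] P₀} {d₁ : P₂ →ₗ[R] P₁} {φ₀ : P₀ →ₗ[R] P₁} (hφ : ∀ p, d₀ (φ₀ p) = x • p)
include hx hφ

theorem exists_eq_redMap_add_redMap_of_redMap_eq_zero
    (hker : LinearMap.ker d₀ ≤ LinearMap.range d₁) {z : P₁ ⧸ xsub R x P₁}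
    (hz : redMap R x d₀ z = 0) : ∃ q w, z = redMap R x φ₀ q + redMap R x d₁ w := by
  obtain ⟨p, rfl⟩ := Submodule.Quotient.mk_surjective _ z
  rw [redMap_mk, Submodule.Quotient.mk_eq_zero, mem_xsub_iff hx] at hz
  obtain ⟨u, hu⟩ := hz
  obtain ⟨w, hw⟩ : p - φ₀ u ∈ LinearMap.range d₁ :=
    hker (by rw [LinearMap.mem_ker, map_sub, hφ, hu, sub_self])
  refine ⟨Submodule.Quotient.mk u, Submodule.Quotient.mk w, ?_⟩
  rw [redMap_mk, redMap_mk, ← Submodule.Quotient.mk_add, hw, add_sub_cancel]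

theorem exists_eq_redMap_of_redMap_eq_redMap (hreg : IsSMulRegular P₀ x) (hd : d₀ ∘ₗ d₁ = 0)
    {q : P₀ ⧸ xsub R x P₀} {w : P₂ ⧸ xsub R x P₂} (h : redMap R x φ₀ q = redMap R x d₁ w) :
    ∃ u, q = redMap R x d₀ u := by
  obtain ⟨u, rfl⟩ := Submodule.Quotient.mk_surjective _ q
  obtain ⟨v, rfl⟩ := Submodule.Quotient.mk_surjective _ w
  rw [redMap_mk, redMap_mk, Submodule.Quotient.eq, mem_xsub_iff hx] at h
  obtain ⟨c, hc⟩ := h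
  have hxu : x • u = x • d₀ c := by
    simpa [hφ, ← LinearMap.comp_apply, hd] using congrArg d₀ hc
  exact ⟨Submodule.Quotient.mk c, by rw [redMap_mk, hreg hxu]⟩

end FirstHomology

theorem stmt6_general (R : Type) [Ring R] (x : R)
    (hx : ∀ r : R, r * x = x * r) (hreg : IsRegular x)
    (P : ℕ → Type) [∀ j, AddCommGroup (P j)] [∀ j, Module R (P j)]
    (hproj : ∀ j, Module.Projective R (P j))
    (d : ∀ j, P (j + 1) →ₗ[R] P j)
    (hex : ∀ j, LinearMap.ker (d j) = LinearMap.range (d (j + 1)))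
    (φ : ∀ j, P j →ₗ[R] P (j + 1))
    (hh0 : ∀ p : P 0, d 0 (φ 0 p) = x • p)
    (hh : ∀ j (p : P (j + 1)), φ j (d j p) + d (j + 1) (φ (j + 1) p) = x • p) :
    -- the reduced maps form a chain map Σ(P ⊗ S) ⟶ P ⊗ S :
    (∀ q, redMap R x (d 0) (redMap R x (φ 0) q) = 0) ∧
    (∀ j q, redMap R x (d (j + 1)) (redMap R x (φ (j + 1)) q) =
      - redMap R x (φ j) (redMap R x (d j) q)) ∧
    -- it induces an isomorphism on first homology groups :
    (∀ z, redMap R x (d 0) z = 0 →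
      ∃ q w, z = redMap R x (φ 0) q + redMap R x (d 1) w) ∧
    (∀ q, (∃ w, redMap R x (φ 0) q = redMap R x (d 1) w) →
      ∃ u, q = redMap R x (d 0) u) := by
  have := hproj 0
  have hreg₀ : IsSMulRegular (P 0) x :=
    (Module.Projective.isTorsionFree R (P 0)).isSMulRegular hreg
  have hd : d 0 ∘ₗ d 1 = 0 := (LinearMap.exact_iff.mpr (hex 0)).linearMap_comp_eq_zero
  exact ⟨redMap_redMap_eq_zero hh0, fun j => redMap_redMap_eq_neg (hh j),
    fun _ => exists_eq_redMap_add_redMap_of_redMap_eq_zero hx hh0 (hex 0).le,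
    fun _ ⟨_, h⟩ => exists_eq_redMap_of_redMap_eq_redMap hx hh0 hreg₀ hd h⟩

/-- Shamash: Let `x` be a central element of `R` annihilating a left
`R`-module `N`, `S = R/(x)`, `P• → N` a projective resolution over `R`, and
`{φ_i : P_{i-1} → P_i}` a null-homotopy of the lift of multiplication by `x` to `P•`.
Then the reduced maps `φ̄_i = φ_i ⊗_R S` define a chain map
`Ψ : Σ(P• ⊗_R S) → P• ⊗_R S`, i.e. `φ̄_{i+1} d̄_{i+1} = -d̄_i φ̄_i` for all `i`
(in degree `0` this reads `d̄_1 ∘ φ̄_1 = 0`), and `Ψ` induces an isomorphism on first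
homology groups (the last two conjuncts express surjectivity and injectivity of the
induced map `H₁(ΣP̄•) = P̄₀/im d̄₁ → H₁(P̄•)`). -/
theorem stmt6 (R : Type) [Ring R] (x : R)
    (hx : ∀ r : R, r * x = x * r) (hreg : IsRegular x)
    (N : Type) [AddCommGroup N] [Module R N] (hxN : ∀ v : N, x • v = 0)
    (P : ℕ → Type) [∀ j, AddCommGroup (P j)] [∀ j, Module R (P j)]
    (hproj : ∀ j, Module.Projective R (P j))
    (d : ∀ j, P (j + 1) →ₗ[R] P j) (ε : P 0 →ₗ[R] N)
    (hεsurj : Function.Surjective ε)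
    (hex0 : LinearMap.ker ε = LinearMap.range (d 0))
    (hex : ∀ j, LinearMap.ker (d j) = LinearMap.range (d (j + 1)))
    (φ : ∀ j, P j →ₗ[R] P (j + 1))
    (hh0 : ∀ p : P 0, d 0 (φ 0 p) = x • p)
    (hh : ∀ j (p : P (j + 1)), φ j (d j p) + d (j + 1) (φ (j + 1) p) = x • p) :
    -- the reduced maps form a chain map Σ(P ⊗ S) ⟶ P ⊗ S :
    (∀ q, redMap R x (d 0) (redMap R x (φ 0) q) = 0) ∧
    (∀ j q, redMap R x (d (j + 1)) (redMap R x (φ (j + 1)) q) =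
      - redMap R x (φ j) (redMap R x (d j) q)) ∧
    -- it induces an isomorphism on first homology groups :
    (∀ z, redMap R x (d 0) z = 0 →
      ∃ q w, z = redMap R x (φ 0) q + redMap R x (d 1) w) ∧
    (∀ q, (∃ w, redMap R x (φ 0) q = redMap R x (d 1) w) →
      ∃ u, q = redMap R x (d 0) u) :=
  stmt6_general R x hx hreg P hproj d hex φ hh0 hh
end

section
/- (Fox) Let F be the free group on x_1, …, x_n. For each i there is a unique derivation ∂/∂x_i : F → ℤF (satisfying D(uv) = D(u) + u·D(v)) with ∂x_j/∂x_i = δ_{ij}, and for every y ∈ F the fundamental formula y − 1 = Σ_{i=1}^n (∂y/∂x_i)(x_i − 1) holds in ℤF. -/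
/-!
A derivation `D` of a group `G` twisted by `ρ` is the same thing as the left component of a
homomorphism `u ↦ (D u, u)` into the semidirect product `A ⋊ G`. On a free group such a
homomorphism can be prescribed freely on the generators, which gives existence, and
derivations agreeing on the generators agree everywhere, which gives uniqueness. Both sides of
the fundamental formula are derivations (`u ↦ ρ u - 1` is one, and right multiplication by
constants preserves derivations) taking the value `ρ xⱼ - 1` at `xⱼ`, hence they coincide.
-/

/-- A derivation into `A` regarded as a left `G`-module through `ρ`. -/
def IsDerivation {G A : Type*} [Monoid G] [Ring A] (ρ : G →* A) (D : G → A) : Prop :=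
  ∀ u v, D (u * v) = D u + ρ u * D v

namespace IsDerivation

variable {G A : Type*} [Ring A]

section Monoid
variable [Monoid G] {ρ : G →* A} {D : G → A}

theorem map_one (hD : IsDerivation ρ D) : D 1 = 0 := by
  simpa using hD 1 1

theorem mul_const (hD : IsDerivation ρ D) (c : A) : IsDerivation ρ (fun u => D u * c) := by
  intro u v
  simp only [hD u v, add_mul, mul_assoc]

theorem sum {ι : Type*} (s : Finset ι) {D : ι → G → A}
    (hD : ∀ i ∈ s, IsDerivation ρ (D i)) :
    IsDerivation ρ (fun u => ∑ i ∈ s, D i u) := by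
  intro u v
  simp only [Finset.sum_congr rfl fun i hi => hD i hi u v, Finset.sum_add_distrib, Finset.mul_sum]

variable (ρ) in
theorem sub_one : IsDerivation ρ (fun u => ρ u - 1) := by
  intro u v
  simp only [map_mul, mul_sub, mul_one]
  abel

end Monoid

theorem map_inv [Group G] {ρ : G →* A} {D : G → A} (hD : IsDerivation ρ D) (u : G) :
    D u⁻¹ = -(ρ u⁻¹ * D u) := by
  have h := hD u⁻¹ u
  rw [inv_mul_cancel, hD.map_one] at h
  exact eq_neg_of_add_eq_zero_left h.symm

end IsDerivation

abbrev MonoidHom.mulLeftAut {G A : Type*} [Group G] [Ring A] (ρ : G →* A) :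
    G →* MulAut (Multiplicative A) :=
  (MulAutMultiplicative A).symm.toMonoidHom.comp (AddAut.mulLeft.comp ρ.toHomUnits)

namespace FreeGroup

variable {α A : Type*} [Ring A] {ρ : FreeGroup α →* A}

theorem IsDerivation.ext {D D' : FreeGroup α → A} (hD : IsDerivation ρ D)
    (hD' : IsDerivation ρ D') (h : ∀ j, D (of j) = D' (of j)) : D = D' := by
  funext u
  induction u using FreeGroup.induction_on with
  | C1 => rw [hD.map_one, hD'.map_one]
  | of j => exact h j
  | inv_of j hj => rw [hD.map_inv, hD'.map_inv, hj]
  | mul u v hu hv => rw [hD, hD', hu, hv]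

variable (ρ) in
theorem exists_isDerivation (d : α → A) :
    ∃ D : FreeGroup α → A, IsDerivation ρ D ∧ ∀ j, D (of j) = d j := by
  let f : FreeGroup α →* Multiplicative A ⋊[ρ.mulLeftAut] FreeGroup α :=
    FreeGroup.lift fun j => ⟨.ofAdd (d j), of j⟩
  have hf : ∀ u, (f u).right = u := DFunLike.congr_fun
    (FreeGroup.ext_hom (f := SemidirectProduct.rightHom.comp f) (g := .id _) fun j => by simp [f])
  refine ⟨fun u => (f u).left.toAdd, fun u v => ?_, fun j => by simp [f]⟩
  show (f (u * v)).left.toAdd = _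
  rw [_root_.map_mul, SemidirectProduct.mul_left, hf]
  rfl

theorem sub_one_eq_sum_mul_sub_one [Fintype α] [DecidableEq α] {D : α → FreeGroup α → A}
    (hD : ∀ i, IsDerivation ρ (D i)) (hof : ∀ i j, D i (of j) = if i = j then 1 else 0)
    (y : FreeGroup α) : ρ y - 1 = ∑ i, D i y * (ρ (of i) - 1) := by
  have hsum : IsDerivation ρ fun u => ∑ i, D i u * (ρ (of i) - 1) :=
    IsDerivation.sum _ fun i _ => (hD i).mul_const _
  refine congr_fun (IsDerivation.ext (IsDerivation.sub_one ρ) hsum fun j => ?_) y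
  simp [hof]

end FreeGroup

open FreeGroup

/-- Fox: Let `F` be the free group on `x₁, …, x_n`.  For each `i` there is
a unique derivation `∂/∂xᵢ : F → ℤF` (satisfying `D(uv) = D(u) + u·D(v)`) with
`∂x_j/∂x_i = δ_{ij}`, and for every `y ∈ F` the fundamental formula
`y - 1 = Σᵢ (∂y/∂xᵢ)(xᵢ - 1)` holds in `ℤF`. -/
theorem stmt14 (n : ℕ) :
    (∀ i : Fin n, ∃! D : FreeGroup (Fin n) → MonoidAlgebra ℤ (FreeGroup (Fin n)),
      (∀ u v, D (u * v) = D u + MonoidAlgebra.of ℤ (FreeGroup (Fin n)) u * D v) ∧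
      (∀ j, D (FreeGroup.of j) = if i = j then 1 else 0)) ∧
    (∀ D : Fin n → FreeGroup (Fin n) → MonoidAlgebra ℤ (FreeGroup (Fin n)),
      (∀ i, (∀ u v, D i (u * v) = D i u + MonoidAlgebra.of ℤ (FreeGroup (Fin n)) u * D i v) ∧
        (∀ j, D i (FreeGroup.of j) = if i = j then 1 else 0)) →
      ∀ y : FreeGroup (Fin n),
        MonoidAlgebra.of ℤ (FreeGroup (Fin n)) y - 1 =
          ∑ i : Fin n, D i y * (MonoidAlgebra.of ℤ (FreeGroup (Fin n)) (FreeGroup.of i) - 1)) := by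
  refine ⟨fun i => ?_, fun D hD =>
    sub_one_eq_sum_mul_sub_one (fun i => (hD i).1) fun i => (hD i).2⟩
  obtain ⟨D, hD, hof⟩ :=
    exists_isDerivation (MonoidAlgebra.of ℤ _) fun j => if i = j then 1 else 0
  exact ⟨D, ⟨hD, hof⟩, fun D' ⟨hD', hof'⟩ =>
    IsDerivation.ext hD' hD fun j => (hof' j).trans (hof j).symm⟩
end
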